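/- arXiv:1602.00336 — 3 statements merged into one kernel-verified Lean document; each statement's English description precedes it below -/
import Mathlib

section
/- Weniger transformation (finite truncation identity): for every real x > 0 and every sequence (a_k), and every N ≥ 1, Σ_{k=1}^{N} a_k/x^{k+1} = Σ_{k=1}^{N} [(-1)^k Σ_{l=1}^{k} (-1)^l a_l s(k,l)] / ((x)_{k+1}) + R_N(x), where s(k,l) are the signed Stirling numbers of the first kind, (x)_{k+1} = x(x+1)⋯(x+k) is the rising factorial, and R_N(x) = O(x^{-N-2}) as x → ∞. -/
open Finset Real Filter

/-- Unsigned Stirling numbers of the first kind. -/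
def stirling1 : ℕ → ℕ → ℕ
  | 0, 0 => 1
  | 0, _ + 1 => 0
  | _ + 1, 0 => 0
  | n + 1, k + 1 => n * stirling1 n (k + 1) + stirling1 n k

/-- Signed Stirling numbers of the first kind, as reals. -/
noncomputable def s1 (k l : ℕ) : ℝ := (-1 : ℝ) ^ (k - l) * stirling1 k l

/-- Bernoulli number (with `B 1 = -1/2`) as a real. -/
noncomputable def B (m : ℕ) : ℝ := ((bernoulli m : ℚ) : ℝ)

/-- Rising factorial (Pochhammer symbol) `(x)_k = x(x+1)⋯(x+k-1)`. -/
noncomputable def rf (x : ℝ) (k : ℕ) : ℝ := ∏ i ∈ Finset.range k, (x + i)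

/-!
Writing `S(k, l)` for the unsigned Stirling numbers of the first kind, `(x)_M = ∑ j, S(M, j) x ^ j`,
and `x ^ -(l + 1) = ∑_{k ≥ l} S(k, l) / (x)_{k+1}`. Truncated to `k < M`, the remainder of this
expansion is `P(x) / (x ^ (l + 1) (x)_M)` with `P` the part of degree `≤ l` of `(x)_M`: the
recurrence `S(M + 1, j + 1) = M S(M, j + 1) + S(M, j)` makes this an induction on `M`. Since
`deg P ≤ l`, the remainder is `O(x ^ -(M + 1))`. The theorem follows by summing these expansions
against `a l`, after `(-1) ^ (k + l) s(k, l) = S(k, l)` and an exchange of the two summations.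
-/

open Nat in
lemma stirling1_eq_stirlingFirst : stirling1 = stirlingFirst := by
  funext n k
  induction n generalizing k with
  | zero => cases k <;> rfl
  | succ n ih =>
    cases k with
    | zero => rfl
    | succ k => rw [stirlingFirst_succ_succ, ← ih, ← ih]; rfl

lemma neg_one_pow_mul_neg_one_pow_mul_s1 (k l : ℕ) :
    (-1 : ℝ) ^ k * (-1) ^ l * s1 k l = Nat.stirlingFirst k l := by
  rw [s1, stirling1_eq_stirlingFirst]
  rcases le_or_gt l k with hlk | hkl
  · obtain ⟨m, rfl⟩ := Nat.exists_eq_add_of_le hlk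
    rw [Nat.add_sub_cancel_left, ← mul_assoc, ← pow_add, ← pow_add,
      Even.neg_one_pow ⟨l + m, by ring⟩, one_mul]
  · simp [Nat.stirlingFirst_eq_zero_of_lt hkl]

lemma sum_stirlingFirst_succ_mul_pow (x : ℝ) (n l : ℕ) :
    ∑ j ∈ range (l + 1), (Nat.stirlingFirst (n + 1) j : ℝ) * x ^ j =
      n * ∑ j ∈ range (l + 1), (Nat.stirlingFirst n j : ℝ) * x ^ j +
        x * ∑ j ∈ range l, (Nat.stirlingFirst n j : ℝ) * x ^ j := by
  induction l with
  | zero => cases n <;> simp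
  | succ l ih =>
    rw [sum_range_succ, ih]
    simp only [sum_range_succ]
    rw [Nat.stirlingFirst_succ_succ]
    push_cast
    ring

lemma rf_succ (x : ℝ) (M : ℕ) : rf x (M + 1) = rf x M * (x + M) :=
  prod_range_succ _ _

lemma rf_pos {x : ℝ} (hx : 0 < x) (M : ℕ) : 0 < rf x M :=
  prod_pos fun _ _ => by positivity

lemma pow_le_rf {x : ℝ} (hx : 0 ≤ x) (M : ℕ) : x ^ M ≤ rf x M :=
  calc x ^ M = ∏ _i ∈ range M, x := by rw [prod_const, card_range]
    _ ≤ rf x M := prod_le_prod (fun _ _ => hx) fun i _ => le_add_of_nonneg_right i.cast_nonneg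

noncomputable def factorialSeriesRemainder (l M : ℕ) (x : ℝ) : ℝ :=
  (∑ j ∈ range (l + 1), (Nat.stirlingFirst M j : ℝ) * x ^ j) / (x ^ (l + 1) * rf x M)

lemma factorialSeriesRemainder_zero (l : ℕ) (x : ℝ) :
    factorialSeriesRemainder l 0 x = 1 / x ^ (l + 1) := by
  rw [factorialSeriesRemainder, sum_range_succ', sum_eq_zero fun j _ => by simp]
  simp [rf]

lemma factorialSeriesRemainder_eq_add_succ {x : ℝ} (hx : 0 < x) (l M : ℕ) :
    factorialSeriesRemainder l M x =
      Nat.stirlingFirst M l / rf x (M + 1) + factorialSeriesRemainder l (M + 1) x := by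
  have hM := rf_pos hx M
  have hxM : 0 < x + M := by positivity
  rw [factorialSeriesRemainder, factorialSeriesRemainder, sum_stirlingFirst_succ_mul_pow,
    rf_succ, sum_range_succ]
  field_simp
  ring

theorem one_div_pow_eq_sum_add_factorialSeriesRemainder {x : ℝ} (hx : 0 < x) (l M : ℕ) :
    1 / x ^ (l + 1) =
      ∑ k ∈ range M, Nat.stirlingFirst k l / rf x (k + 1) + factorialSeriesRemainder l M x := by
  induction M with
  | zero => rw [factorialSeriesRemainder_zero, sum_range_zero, zero_add]
  | succ M ih => rw [ih, factorialSeriesRemainder_eq_add_succ hx, sum_range_succ, add_assoc]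

lemma pow_div_pow_mul_rf_isBigO {j l : ℕ} (hjl : j ≤ l) (M : ℕ) :
    (fun x : ℝ => x ^ j / (x ^ (l + 1) * rf x M)) =O[atTop] fun x => x ^ (-(M : ℤ) - 1) := by
  refine Asymptotics.IsBigO.of_bound 1 ?_
  filter_upwards [eventually_ge_atTop 1] with x hx
  have hx0 : 0 < x := one_pos.trans_le hx
  have hrf := rf_pos hx0 M
  rw [Real.norm_of_nonneg (by positivity), Real.norm_of_nonneg (zpow_nonneg hx0.le _), one_mul]
  calc x ^ j / (x ^ (l + 1) * rf x M) ≤ x ^ l / (x ^ (l + 1) * x ^ M) :=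
        div_le_div₀ (by positivity) (pow_le_pow_right₀ hx hjl) (by positivity)
          (mul_le_mul_of_nonneg_left (pow_le_rf hx0.le M) (by positivity))
    _ = x ^ (-(M : ℤ) - 1) := by
        rw [zpow_sub₀ hx0.ne', zpow_neg, zpow_one, zpow_natCast]
        field_simp
        ring

lemma factorialSeriesRemainder_isBigO (l M : ℕ) :
    factorialSeriesRemainder l M =O[atTop] fun x : ℝ => x ^ (-(M : ℤ) - 1) := by
  have hsum : factorialSeriesRemainder l M = fun x =>
      ∑ j ∈ range (l + 1), (Nat.stirlingFirst M j : ℝ) * (x ^ j / (x ^ (l + 1) * rf x M)) := by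
    funext x
    simp only [factorialSeriesRemainder, sum_div, mul_div_assoc]
  rw [hsum]
  exact Asymptotics.IsBigO.fun_sum fun j hj =>
    (pow_div_pow_mul_rf_isBigO (Nat.lt_succ_iff.mp (mem_range.mp hj)) M).const_mul_left _

lemma sum_Icc_sum_Icc_stirlingFirst_comm (f : ℕ → ℕ → ℝ) (N : ℕ) :
    ∑ k ∈ Icc 1 N, ∑ l ∈ Icc 1 k, Nat.stirlingFirst k l * f k l =
      ∑ l ∈ Icc 1 N, ∑ k ∈ range (N + 1), Nat.stirlingFirst k l * f k l := by
  rw [sum_comm' (t' := Icc 1 N) (s' := fun l => Icc l N) (by intro k l; simp only [mem_Icc]; omega)]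
  refine sum_congr rfl fun l _ => sum_subset (fun k hk => ?_) fun k hkN hk => ?_
  · simp only [mem_Icc, mem_range] at hk ⊢; omega
  · rw [Nat.stirlingFirst_eq_zero_of_lt (by simp only [mem_Icc, mem_range] at *; omega),
      Nat.cast_zero, zero_mul]

theorem weniger_transformation_general (a : ℕ → ℝ) (N : ℕ) :
    ∃ R : ℝ → ℝ,
      (∀ x : ℝ, 0 < x →
        ∑ k ∈ Finset.Icc 1 N, a k / x ^ (k + 1) =
          ∑ k ∈ Finset.Icc 1 N,
            ((-1 : ℝ) ^ k * ∑ l ∈ Finset.Icc 1 k, (-1 : ℝ) ^ l * a l * s1 k l) /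
              rf x (k + 1) + R x) ∧
      R =O[atTop] fun x : ℝ => x ^ (-(N : ℤ) - 2) := by
  refine ⟨fun x => ∑ l ∈ Icc 1 N, a l * factorialSeriesRemainder l (N + 1) x, fun x hx => ?_, ?_⟩
  · have hcoeff : ∀ k, (-1 : ℝ) ^ k * ∑ l ∈ Icc 1 k, (-1 : ℝ) ^ l * a l * s1 k l =
        ∑ l ∈ Icc 1 k, Nat.stirlingFirst k l * a l := by
      intro k
      rw [mul_sum]
      refine sum_congr rfl fun l _ => ?_
      rw [← neg_one_pow_mul_neg_one_pow_mul_s1]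
      ring
    simp only [hcoeff, sum_div, mul_div_assoc]
    rw [sum_Icc_sum_Icc_stirlingFirst_comm, ← sum_add_distrib]
    refine sum_congr rfl fun l _ => ?_
    rw [div_eq_mul_one_div, one_div_pow_eq_sum_add_factorialSeriesRemainder hx l (N + 1),
      mul_add, mul_sum]
    congr 1
    exact sum_congr rfl fun k _ => by ring
  · refine Asymptotics.IsBigO.fun_sum fun l _ => ?_
    rw [show -(N : ℤ) - 2 = -((N + 1 : ℕ) : ℤ) - 1 by push_cast; ring]
    exact (factorialSeriesRemainder_isBigO l (N + 1)).const_mul_left (a l)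

/-- Weniger transformation, finite truncation: the partial inverse power series equals
the partial inverse factorial series up to a remainder that is `O(x^{-N-2})` at infinity. -/
theorem weniger_transformation (a : ℕ → ℝ) (N : ℕ) (hN : 1 ≤ N) :
    ∃ R : ℝ → ℝ,
      (∀ x : ℝ, 0 < x →
        ∑ k ∈ Finset.Icc 1 N, a k / x ^ (k + 1) =
          ∑ k ∈ Finset.Icc 1 N,
            ((-1 : ℝ) ^ k * ∑ l ∈ Finset.Icc 1 k, (-1 : ℝ) ^ l * a l * s1 k l) /
              rf x (k + 1) + R x) ∧
      R =O[atTop] fun x : ℝ => x ^ (-(N : ℤ) - 2) :=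
  weniger_transformation_general a N
end

section
/- Euler–Maclaurin with Bernoulli-polynomial remainder: if f is C^m (m ≥ 1) on [1, n] for an integer n ≥ 1, then Σ_{k=1}^{n} f(k) = ∫_1^n f(x) dx + (f(n)+f(1))/2 + Σ_{k=2}^{m} (B_k/k!)(f^{(k-1)}(n) - f^{(k-1)}(1)) + ((-1)^{m+1}/m!) ∫_1^n B_m({x}) f^{(m)}(x) dx, where B_m(x) is the m-th Bernoulli polynomial and {x} the fractional part of x. -/
open Finset Real Filter

/-! On each unit interval `[a, a + 1]`, integrating `B_{j+1}(x - a) f^{(j+1)}(x)` by parts gives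
the boundary term `B_{j+1} Δf^{(j)}` (the endpoint values `B_{j+1}(0) = B_{j+1}(1)` agree for
`j ≥ 1`) minus `(j + 1) ∫ B_j(x - a) f^{(j)}(x)`; starting from `B_1(x) = x - 1/2` and iterating
`m - 1` times yields the formula on one interval, with signs `(-1)^k B_k = B_k` because the odd
Bernoulli numbers beyond `B_1` vanish. Summing over `[k, k + 1]`, `k = 1, …, n - 1`, telescopes the
boundary terms, and `x - k = {x}` on each piece assembles the remainders into one integral. -/

open Set intervalIntegral

theorem Int.fract_eqOn_Ico {R : Type*} [Ring R] [LinearOrder R] [IsStrictOrderedRing R]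
    [FloorRing R] (k : ℤ) : EqOn Int.fract (· - (k : R)) (Ico (k : R) (k + 1)) := fun x hx =>
  Int.fract_eq_iff.2 ⟨sub_nonneg.2 hx.1, sub_lt_iff_lt_add'.2 hx.2, k, sub_sub_cancel x _⟩

theorem integral_comp_fract_mul (k : ℤ) (φ g : ℝ → ℝ) :
    ∫ x in (k : ℝ)..k + 1, φ (Int.fract x) * g x = ∫ x in (k : ℝ)..k + 1, φ (x - k) * g x :=
  integral_congr_Ioo_of_le (by linarith) fun x hx => by
    rw [Int.fract_eqOn_Ico k (Ioo_subset_Ico_self hx)]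

theorem intervalIntegrable_comp_fract_mul_iff (k : ℤ) (φ g : ℝ → ℝ) :
    IntervalIntegrable (fun x => φ (Int.fract x) * g x) MeasureTheory.volume k (k + 1) ↔
      IntervalIntegrable (fun x => φ (x - k) * g x) MeasureTheory.volume k (k + 1) :=
  intervalIntegrable_congr_uIoo fun x hx => by
    rw [uIoo_of_le (by linarith)] at hx
    rw [Int.fract_eqOn_Ico k (Ioo_subset_Ico_self hx)]

theorem Finset.sum_range_add_succ_div_two {K : Type*} [Field K] [CharZero K] (F : ℕ → K)
    (N : ℕ) : ∑ i ∈ range N, (F i + F (i + 1)) / 2 = ∑ i ∈ range (N + 1), F i - (F 0 + F N) / 2 := by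
  induction N with
  | zero => simp
  | succ N ih =>
    rw [sum_range_succ, ih, sum_range_succ _ (N + 1)]
    linear_combination (add_halves (F (N + 1))).symm

theorem neg_one_pow_mul_B {k : ℕ} (hk : k ≠ 1) : (-1) ^ k * B k = B k := by
  rcases k.even_or_odd with heven | hodd
  · rw [heven.neg_one_pow, one_mul]
  · rw [B, bernoulli_eq_zero_of_odd hodd (by grind)]
    simp

theorem integral_bernoulliFun_sub_mul_deriv {a b c : ℝ} {g g' : ℝ → ℝ} (j : ℕ) (hab : a ≤ b)
    (hg : ContinuousOn g (Icc a b)) (hg' : ContinuousOn g' (Icc a b))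
    (hderiv : ∀ x ∈ Ioo a b, HasDerivAt g (g' x) x) :
    ∫ x in a..b, bernoulliFun (j + 1) (x - c) * g' x =
      bernoulliFun (j + 1) (b - c) * g b - bernoulliFun (j + 1) (a - c) * g a -
        (j + 1) * ∫ x in a..b, bernoulliFun j (x - c) * g x := by
  have hB (x : ℝ) : HasDerivAt (fun y => bernoulliFun (j + 1) (y - c))
      ((j + 1) * bernoulliFun j (x - c)) x := by
    simpa using (hasDerivAt_bernoulliFun (j + 1) (x - c)).comp_sub_const x c
  have hBc (k : ℕ) : Continuous fun x => bernoulliFun k (x - c) :=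
    (continuous_bernoulliFun k).comp (continuous_sub_right c)
  rw [← uIcc_of_le hab] at hg hg'
  rw [integral_mul_deriv_eq_deriv_mul_of_hasDerivAt (hBc _).continuousOn hg
    (fun x _ => hB x) (by simpa [hab] using hderiv)
    (((hBc j).const_smul ((j : ℝ) + 1)).intervalIntegrable a b) hg'.intervalIntegrable]
  simp_rw [mul_assoc, integral_const_mul]

open Nat

section

variable {D : ℕ → ℝ → ℝ} {m : ℕ}

theorem euler_maclaurin_Icc_add_one (a : ℝ) (hm : 1 ≤ m)
    (hcont : ∀ j ≤ m, ContinuousOn (D j) (Icc a (a + 1)))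
    (hderiv : ∀ j < m, ∀ x ∈ Ioo a (a + 1), HasDerivAt (D j) (D (j + 1) x) x) :
    (D 0 a + D 0 (a + 1)) / 2 = (∫ x in a..a + 1, D 0 x) +
      ∑ k ∈ Icc 2 m, B k / k ! * (D (k - 1) (a + 1) - D (k - 1) a) +
      (-1) ^ (m + 1) / m ! * ∫ x in a..a + 1, bernoulliFun m (x - a) * D m x := by
  induction m, hm using Nat.le_induction with
  | base =>
    have h := integral_bernoulliFun_sub_mul_deriv (c := a) 0 (by linarith)
      (hcont 0 zero_le_one) (hcont 1 le_rfl) (hderiv 0 one_pos)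
    simp only [zero_add, Nat.cast_zero, one_mul, add_sub_cancel_left, sub_self,
      bernoulliFun_zero] at h
    rw [Finset.Icc_eq_empty (by omega), sum_empty, h]
    norm_num [bernoulliFun_one]
    ring
  | succ m hm ih =>
    rw [ih (fun j hj => hcont j (by omega)) (fun j hj => hderiv j (by omega))]
    have h := integral_bernoulliFun_sub_mul_deriv (c := a) m (by linarith)
      (hcont m (by omega)) (hcont (m + 1) le_rfl) (hderiv m (by omega))
    rw [add_sub_cancel_left, sub_self, bernoulliFun_endpoints_eq_of_ne_one (by omega),
      bernoulliFun_eval_zero] at h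
    have hsign := neg_one_pow_mul_B (k := m + 1) (by omega)
    rw [sum_Icc_succ_top (by omega), h, factorial_succ, add_tsub_cancel_right]
    unfold B at hsign ⊢
    push_cast
    field_simp
    linear_combination (D m (a + 1) - D m a) * hsign

theorem euler_maclaurin_Icc_intCast_add (a : ℤ) (N : ℕ) (hm : 1 ≤ m)
    (hcont : ∀ j ≤ m, ContinuousOn (D j) (Icc (a : ℝ) (a + N)))
    (hderiv : ∀ j < m, ∀ x ∈ Ioo (a : ℝ) (a + N), HasDerivAt (D j) (D (j + 1) x) x) :
    ∑ i ∈ range (N + 1), D 0 (a + i) =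
      (∫ x in (a : ℝ)..a + N, D 0 x) + (D 0 (a + N) + D 0 a) / 2 +
        ∑ k ∈ Icc 2 m, B k / k ! * (D (k - 1) (a + N) - D (k - 1) a) +
        (-1) ^ (m + 1) / m ! * ∫ x in (a : ℝ)..a + N, bernoulliFun m (Int.fract x) * D m x := by
  set u : ℕ → ℝ := fun i => a + i with hu_def
  have hu (i : ℕ) : u (i + 1) = u i + 1 := by simp only [hu_def]; push_cast; ring
  have hu_int (i : ℕ) : u i = ((a + i : ℤ) : ℝ) := by simp only [hu_def]; push_cast; ring
  have hle {i : ℕ} (hi : i < N) : u i + 1 ≤ a + N := by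
    simp only [hu_def]; rw [add_assoc]; gcongr; exact_mod_cast hi
  have hcont' {i : ℕ} (hi : i < N) {j : ℕ} (hj : j ≤ m) :
      ContinuousOn (D j) (Icc (u i) (u i + 1)) :=
    (hcont j hj).mono (Icc_subset_Icc (by simp [hu_def]) (hle hi))
  have hpiece {i : ℕ} (hi : i < N) := euler_maclaurin_Icc_add_one (D := D) (u i) hm
    (fun j hj => hcont' hi hj) fun j hj x hx =>
      hderiv j hj x (Ioo_subset_Ioo (by simp [hu_def]) (hle hi) hx)
  have hfract {i : ℕ} : ∫ x in u i..u (i + 1), bernoulliFun m (x - u i) * D m x =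
      ∫ x in u i..u (i + 1), bernoulliFun m (Int.fract x) * D m x := by
    rw [hu, hu_int]; exact (integral_comp_fract_mul _ _ _).symm
  have hint_fract {i : ℕ} (hi : i < N) :
      IntervalIntegrable (fun x => bernoulliFun m (Int.fract x) * D m x) MeasureTheory.volume
        (u i) (u (i + 1)) := by
    rw [hu, hu_int, intervalIntegrable_comp_fract_mul_iff, ← hu_int]
    exact (((continuous_bernoulliFun m).comp (continuous_sub_right _)).continuousOn.mul
      (hcont' hi le_rfl)).intervalIntegrable_of_Icc (by linarith)
  have hint {i : ℕ} (hi : i < N) :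
      IntervalIntegrable (D 0) MeasureTheory.volume (u i) (u (i + 1)) := by
    rw [hu]; exact (hcont' hi (zero_le m)).intervalIntegrable_of_Icc (by linarith)
  have htelescope (j : ℕ) :
      ∑ i ∈ range N, (D j (u (i + 1)) - D j (u i)) = D j (u N) - D j (u 0) :=
    sum_range_sub (fun i => D j (u i)) N
  have hsum := Finset.sum_congr rfl fun i hi => hpiece (mem_range.1 hi)
  simp only [← hu, hfract] at hsum
  rw [sum_add_distrib, sum_add_distrib, ← mul_sum, sum_comm,
    sum_integral_adjacent_intervals (a := u) (fun i hi => hint hi),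
    sum_integral_adjacent_intervals (a := u) (fun i hi => hint_fract hi),
    sum_range_add_succ_div_two (fun i => D 0 (u i))] at hsum
  simp only [← mul_sum, htelescope] at hsum
  simp only [hu_def, Nat.cast_zero, add_zero] at hsum
  linarith

end

open Topology in
theorem ContDiffOn.hasDerivAt_iteratedDerivWithin {𝕜 F : Type*} [NontriviallyNormedField 𝕜]
    [NormedAddCommGroup F] [NormedSpace 𝕜 F] {f : 𝕜 → F} {s : Set 𝕜} {n : WithTop ℕ∞}
    (hf : ContDiffOn 𝕜 n f s) (hs : UniqueDiffOn 𝕜 s) {j : ℕ} (hj : j < n) {x : 𝕜}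
    (hx : s ∈ 𝓝 x) :
    HasDerivAt (iteratedDerivWithin j f s) (iteratedDerivWithin (j + 1) f s x) x := by
  rw [iteratedDerivWithin_succ]
  exact ((hf.differentiableOn_iteratedDerivWithin hj hs) x
    (mem_of_mem_nhds hx)).hasDerivWithinAt.hasDerivAt hx

/-- Euler–Maclaurin summation formula with Bernoulli-polynomial remainder. -/
theorem euler_maclaurin (f : ℝ → ℝ) (n m : ℕ) (hn : 1 ≤ n) (hm : 1 ≤ m)
    (hf : ContDiffOn ℝ m f (Set.Icc 1 n)) :
    ∑ k ∈ Finset.Icc 1 n, f k =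
      (∫ x in (1:ℝ)..n, f x) + (f n + f 1) / 2 +
        ∑ k ∈ Finset.Icc 2 m, (B k / (Nat.factorial k : ℝ)) *
          (iteratedDerivWithin (k - 1) f (Set.Icc 1 (n : ℝ)) n -
            iteratedDerivWithin (k - 1) f (Set.Icc 1 (n : ℝ)) 1) +
        ((-1 : ℝ) ^ (m + 1) / (Nat.factorial m : ℝ)) *
          ∫ x in (1:ℝ)..n,
            (Polynomial.aeval (Int.fract x) (Polynomial.bernoulli m) : ℝ) *
              iteratedDerivWithin m f (Set.Icc 1 (n : ℝ)) x := by
  obtain rfl | hn1 := hn.eq_or_lt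
  · simp
  have hs : UniqueDiffOn ℝ (Icc 1 (n : ℝ)) := uniqueDiffOn_Icc (by exact_mod_cast hn1)
  obtain ⟨N, rfl⟩ : ∃ N, n = N + 1 := ⟨n - 1, by omega⟩
  have hN : ((1 : ℤ) : ℝ) + N = ((N + 1 : ℕ) : ℝ) := by push_cast; ring
  have h := euler_maclaurin_Icc_intCast_add (D := fun j => iteratedDerivWithin j f (Icc 1 _))
    1 N hm
    (fun j hj => by
      rw [hN, Int.cast_one]; exact hf.continuousOn_iteratedDerivWithin (by exact_mod_cast hj) hs)
    (fun j hj x hx => hf.hasDerivAt_iteratedDerivWithin hs (by exact_mod_cast hj)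
      (Icc_mem_nhds (by simpa using hx.1) (hN ▸ hx.2)))
  have hB (x : ℝ) : Polynomial.aeval x (Polynomial.bernoulli m) = bernoulliFun m x := by
    rw [bernoulliFun, Polynomial.eval_map_algebraMap]
  rw [← Finset.Ico_add_one_right_eq_Icc, sum_Ico_eq_sum_range]
  simp only [hB, iteratedDerivWithin_zero, Int.cast_one, add_tsub_cancel_right,
    Nat.cast_add, Nat.cast_one] at h ⊢
  rwa [add_comm (1 : ℝ) N] at h
end

section
/- For every natural number k ≥ 1, the k-th tangent number T_k := 2^{2k}(2^{2k}-1)|B_{2k}|/(2k) is a positive integer. -/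
open Finset Real Filter

/-!
With `E = e^{2x}`, the series `u = tanh x` satisfies `u (E + 1) = E - 1`. Comparing coefficients
of `x^n / n!` gives `2 w_n = 2^n - ∑_{i<n} C(n,i) 2^{n-i} w_i` for `n ≥ 1`, where
`w_n = n! [x^n] u`; every term of the sum is even, so by induction all `w_n` are integers.
On the other hand `x tanh x = x + 4x / (e^{4x} - 1) - 2x / (e^{2x} - 1)`, which gives
`w_{2k-1} = 2^{2k} (2^{2k} - 1) B_{2k} / (2k)`, and `B_{2k} ≠ 0` because `ζ(2k) > 0`.
-/

open PowerSeries
open scoped Nat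

section EGF

variable {R : Type*} [CommSemiring R]

noncomputable def egfCoeff (f : R⟦X⟧) (n : ℕ) : R := n ! * coeff n f

theorem egfCoeff_add (f g : R⟦X⟧) (n : ℕ) :
    egfCoeff (f + g) n = egfCoeff f n + egfCoeff g n := by
  simp only [egfCoeff, map_add, mul_add]

theorem egfCoeff_mul (f g : R⟦X⟧) (n : ℕ) :
    egfCoeff (f * g) n =
      ∑ i ∈ range (n + 1), n.choose i * egfCoeff f i * egfCoeff g (n - i) := by
  rw [egfCoeff, coeff_mul, Finset.Nat.sum_antidiagonal_eq_sum_range_succ_mk, mul_sum]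
  refine sum_congr rfl fun i hi => ?_
  have hfac := Nat.choose_mul_factorial_mul_factorial (mem_range_succ_iff.mp hi)
  rw [egfCoeff, egfCoeff, ← hfac]
  push_cast
  ring

theorem egfCoeff_rescale_exp {A : Type*} [CommRing A] [Algebra ℚ A] (a : A) (n : ℕ) :
    egfCoeff (rescale a (exp A)) n = a ^ n := by
  rw [egfCoeff, coeff_rescale, coeff_exp, ← map_natCast (algebraMap ℚ A), mul_left_comm,
    ← map_mul, mul_one_div_cancel (by exact_mod_cast n.factorial_ne_zero), map_one, mul_one]

end EGF

theorem rescale_bernoulliPowerSeries_mul_exp_sub_one {A : Type*} [CommRing A] [Algebra ℚ A]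
    (a : A) :
    rescale a (bernoulliPowerSeries A) * (rescale a (exp A) - 1) = C a * X := by
  simpa only [map_mul, map_sub, map_one, rescale_X] using
    congrArg (rescale a) (bernoulliPowerSeries_mul_exp_sub_one A)

noncomputable def tanhSeries : ℚ⟦X⟧ :=
  (rescale 2 (exp ℚ) - 1) * (rescale 2 (exp ℚ) + 1)⁻¹

theorem tanhSeries_mul_exp_add_one :
    tanhSeries * (rescale 2 (exp ℚ) + 1) = rescale 2 (exp ℚ) - 1 := by
  have h : constantCoeff (rescale (2 : ℚ) (exp ℚ) + 1) ≠ 0 := by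
    rw [← coeff_zero_eq_constantCoeff_apply, map_add, coeff_rescale, coeff_exp, coeff_one]
    norm_num
  rw [tanhSeries, mul_assoc, PowerSeries.inv_mul_cancel _ h, mul_one]

theorem X_mul_tanhSeries :
    X * tanhSeries =
      X + rescale 4 (bernoulliPowerSeries ℚ) - rescale 2 (bernoulliPowerSeries ℚ) := by
  have hexp : rescale (2 : ℚ) (exp ℚ) * rescale 2 (exp ℚ) = rescale 4 (exp ℚ) := by
    rw [exp_mul_exp_eq_exp_add]; norm_num
  have hne : rescale (4 : ℚ) (exp ℚ) - 1 ≠ 0 := fun h => by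
    simpa [coeff_rescale] using congrArg (coeff 1) h
  have h2 := rescale_bernoulliPowerSeries_mul_exp_sub_one (2 : ℚ)
  have h4 := rescale_bernoulliPowerSeries_mul_exp_sub_one (4 : ℚ)
  simp only [map_ofNat] at h2 h4
  refine mul_right_cancel₀ hne ?_
  linear_combination (X * (rescale 2 (exp ℚ) - 1)) * tanhSeries_mul_exp_add_one - h4
    + (rescale 2 (exp ℚ) + 1) * h2
    - (X * tanhSeries - X + rescale 2 (bernoulliPowerSeries ℚ)) * hexp

theorem egfCoeff_tanhSeries_recurrence (n : ℕ) :
    ∑ i ∈ range (n + 1), n.choose i * egfCoeff tanhSeries i * 2 ^ (n - i)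
      + egfCoeff tanhSeries n = 2 ^ n - if n = 0 then 1 else 0 := by
  have h := congrArg (egfCoeff · n) tanhSeries_mul_exp_add_one
  simp only [mul_add, mul_one, egfCoeff_add, egfCoeff_mul, egfCoeff_rescale_exp] at h
  rw [h, egfCoeff, map_sub, coeff_one, mul_sub, ← egfCoeff, egfCoeff_rescale_exp]
  split_ifs with hn <;> simp [hn]

theorem egfCoeff_tanhSeries_zero : egfCoeff tanhSeries 0 = 0 := by
  simpa [← two_mul] using egfCoeff_tanhSeries_recurrence 0

theorem egfCoeff_tanhSeries_succ (n : ℕ) :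
    egfCoeff tanhSeries (n + 1) = 2 ^ n -
      ∑ i ∈ range (n + 1), (n + 1).choose i * 2 ^ (n - i) * egfCoeff tanhSeries i := by
  have h := egfCoeff_tanhSeries_recurrence (n + 1)
  rw [sum_range_succ, Nat.choose_self, Nat.sub_self] at h
  have hsum :
      ∑ i ∈ range (n + 1), ((n + 1).choose i : ℚ) * egfCoeff tanhSeries i * 2 ^ (n + 1 - i) =
        2 * ∑ i ∈ range (n + 1), (n + 1).choose i * 2 ^ (n - i) * egfCoeff tanhSeries i := by
    rw [mul_sum]
    refine sum_congr rfl fun i hi => ?_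
    rw [Nat.sub_add_comm (mem_range_succ_iff.mp hi), pow_succ]
    ring
  rw [hsum] at h
  simp only [Nat.add_one_ne_zero, if_false, sub_zero, pow_succ] at h
  linear_combination h / 2

theorem egfCoeff_tanhSeries_mem_bot (n : ℕ) : egfCoeff tanhSeries n ∈ (⊥ : Subring ℚ) := by
  induction n using Nat.strong_induction_on with
  | _ n ih =>
    cases n with
    | zero => simp [egfCoeff_tanhSeries_zero]
    | succ n =>
      rw [egfCoeff_tanhSeries_succ]
      refine sub_mem (pow_mem (ofNat_mem _ 2) _) (sum_mem fun i hi => ?_)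
      exact mul_mem (mul_mem (natCast_mem _ _) (pow_mem (ofNat_mem _ 2) _))
        (ih i (mem_range.mp hi))

theorem egfCoeff_tanhSeries_of_ne_zero {n : ℕ} (hn : n ≠ 0) :
    egfCoeff tanhSeries n =
      2 ^ (n + 1) * (2 ^ (n + 1) - 1) * bernoulli (n + 1) / (n + 1 : ℕ) := by
  have h := congrArg (coeff (n + 1)) X_mul_tanhSeries
  simp only [coeff_succ_X_mul, map_add, map_sub, coeff_X, coeff_rescale, bernoulliPowerSeries,
    coeff_mk, Algebra.algebraMap_self, RingHom.id_apply, if_neg (by omega : n + 1 ≠ 1),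
    zero_add] at h
  rw [egfCoeff, h, Nat.factorial_succ, show (4 : ℚ) = 2 * 2 by norm_num, mul_pow]
  push_cast
  field_simp

theorem bernoulli_two_mul_ne_zero {k : ℕ} (hk : k ≠ 0) : bernoulli (2 * k) ≠ 0 := by
  intro h
  have hs := hasSum_zeta_nat hk
  simp only [h, Rat.cast_zero, mul_zero, zero_div] at hs
  have := le_hasSum hs 1 (fun j _ => by positivity)
  norm_num at this

/-- The tangent numbers `T_k = 2^{2k}(2^{2k}-1)|B_{2k}|/(2k)` are positive integers. -/
theorem tangent_number_is_positive_integer (k : ℕ) (hk : 1 ≤ k) :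
    ∃ m : ℕ, 0 < m ∧
      (m : ℚ) = 2 ^ (2 * k) * (2 ^ (2 * k) - 1) * |bernoulli (2 * k)| / (2 * k) := by
  obtain ⟨z, hz⟩ := Subring.mem_bot.mp (egfCoeff_tanhSeries_mem_bot (2 * k - 1))
  rw [egfCoeff_tanhSeries_of_ne_zero (by omega), Nat.sub_add_cancel (by omega)] at hz
  have hpow : (0 : ℚ) < 2 ^ (2 * k) - 1 := sub_pos.mpr (one_lt_pow₀ one_lt_two (by omega))
  have hB : 0 < |bernoulli (2 * k)| := abs_pos.mpr (bernoulli_two_mul_ne_zero (by omega))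
  have habs :
      (z.natAbs : ℚ) = 2 ^ (2 * k) * (2 ^ (2 * k) - 1) * |bernoulli (2 * k)| / (2 * k) := by
    rw [Nat.cast_natAbs, Int.cast_abs, hz, abs_div, abs_mul, abs_mul, abs_of_pos hpow]
    simp
  have hpos : (0 : ℚ) < z.natAbs := by
    rw [habs]
    positivity
  exact ⟨z.natAbs, by exact_mod_cast hpos, habs⟩
end
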